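/- arXiv:0907.0162 — 3 statements merged into one kernel-verified Lean document; each statement's English description precedes it below -/
import Mathlib

section
/- Let a, b, Q be positive integers. There exists an index i such that consecutive denominators in the Farey sequence F_Q satisfy q_i = a and q_{i+1} = b if and only if 1 ≤ a, b ≤ Q, gcd(a,b) = 1, and a + b > Q. Moreover, when these conditions hold, the index i is uniquely determined. -/
open MeasureTheory

/-- The Farey fractions of order `Q`, as a set of rationals in `(0,1]`
with denominator at most `Q` (rationals are automatically in lowest terms). -/
def fareySet (Q : ℕ) : Set ℚ := {x | 0 < x ∧ x ≤ 1 ∧ x.den ≤ Q}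

/-- `IsFarey Q N p q` asserts that `i ↦ p i / q i` (for `1 ≤ i ≤ N`) enumerates the
Farey fractions of order `Q` in increasing order, in lowest terms, extended to all
integer indices by the periodicity `γ_{i+N} = γ_i + 1`. -/
structure IsFarey (Q N : ℕ) (p q : ℤ → ℤ) : Prop where
  qpos : ∀ i : ℤ, 0 < q i
  coprime : ∀ i : ℤ, Int.gcd (p i) (q i) = 1
  mono : ∀ i j : ℤ, i < j → (p i : ℚ) / (q i) < (p j : ℚ) / (q j)
  mem : ∀ i : ℤ, 1 ≤ i → i ≤ (N : ℤ) → ((p i : ℚ) / (q i)) ∈ fareySet Q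
  surj : ∀ x ∈ fareySet Q, ∃ i : ℤ, 1 ≤ i ∧ i ≤ (N : ℤ) ∧ (p i : ℚ) / (q i) = x
  period_p : ∀ i : ℤ, p (i + N) = p i + q i
  period_q : ∀ i : ℤ, q (i + N) = q i

/-- The `k`-index `ν_k(γ_i) = p_{i+k-1} q_{i-1} - p_{i-1} q_{i+k-1}`. -/
def nuk (p q : ℤ → ℤ) (k : ℕ) (i : ℤ) : ℤ :=
  p (i + k - 1) * q (i - 1) - p (i - 1) * q (i + k - 1)

/-! Two neighbours `p/q < r/s` of `F_Q` satisfy `r q - p s = 1` and `q + s > Q`. Given `p/q`,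
choose the solution `x/y` of `x q - p y = 1` with `Q - q < y ≤ Q`; it lies in `F_Q` above `p/q`,
and any `r/s` strictly between the two would have `s = q (x s - r y) + y (r q - p s) ≥ q + y > Q`.
So the successor of `p/q` is `x/y`. Conversely a coprime pair `(a, b)` with `a, b ≤ Q < a + b`
arises from the fraction `y/a` with `x a - b y = 1` and `0 < y ≤ a`, whose successor has
denominator `b` by the same characterisation; the index is unique because `a` and `b` determine
`p_i` modulo `a`. -/

theorem IsCoprime.exists_mul_sub_mul_eq_one_mem_Ioc {a b : ℤ} (h : IsCoprime a b) (ha : 0 < a)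
    (c : ℤ) : ∃ x y : ℤ, x * a - b * y = 1 ∧ y ∈ Set.Ioc (c - a) c := by
  obtain ⟨u, v, huv⟩ := h
  obtain ⟨t, ht, -⟩ := existsUnique_add_zsmul_mem_Ioc ha (-v) (c - a)
  refine ⟨u + t * b, -v + t • a, by rw [smul_eq_mul]; linear_combination huv, ?_⟩
  simpa using ht

theorem Int.eq_of_mul_sub_mul_eq_one {a b x y x' y' : ℤ} (h : x * a - b * y = 1)
    (h' : x' * a - b * y' = 1) (hy : |y - y'| < a) : y = y' := by
  have hab : IsCoprime a b := ⟨x, -y, by linear_combination h⟩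
  have hdvd : a ∣ b * (y - y') := ⟨x - x', by linear_combination h' - h⟩
  exact sub_eq_zero.mp (Int.eq_zero_of_abs_lt_dvd (hab.dvd_of_dvd_mul_left hdvd) hy)

theorem Int.add_le_of_mul_sub_mul_pos {p q r s x y : ℤ} (hq : 0 < q) (hy : 0 < y)
    (hpr : 0 < r * q - p * s) (hrx : 0 < x * s - r * y) (h : x * q - p * y = 1) :
    q + y ≤ s := by
  have hs : s = q * (x * s - r * y) + y * (r * q - p * s) := by linear_combination (-s) * h
  nlinarith

theorem Int.cast_div_lt_cast_div_iff {K : Type*} [Field K] [LinearOrder K] [IsStrictOrderedRing K]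
    {a b c d : ℤ} (hb : 0 < b) (hd : 0 < d) : (a : K) / b < c / d ↔ a * d < c * b := by
  rw [div_lt_div_iff₀ (by exact_mod_cast hb) (by exact_mod_cast hd)]
  norm_cast

namespace IsFarey

variable {Q N : ℕ} {p q : ℤ → ℤ}

theorem strictMono (hF : IsFarey Q N p q) : StrictMono fun i ↦ (p i : ℚ) / q i :=
  fun i j ↦ hF.mono i j

theorem den_eq (hF : IsFarey Q N p q) (i : ℤ) : (((p i : ℚ) / q i).den : ℤ) = q i :=
  Rat.den_div_eq_of_coprime (hF.qpos i) (hF.coprime i)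

theorem N_pos (hF : IsFarey Q N p q) : 0 < N := by
  refine Nat.pos_of_ne_zero fun hN ↦ (hF.qpos 0).ne' ?_
  simpa [hN] using hF.period_p 0

theorem add_N (hF : IsFarey Q N p q) (i : ℤ) :
    (p (i + N) : ℚ) / q (i + N) = p i / q i + 1 := by
  have hq : (q i : ℚ) ≠ 0 := by exact_mod_cast (hF.qpos i).ne'
  rw [hF.period_p, hF.period_q]
  push_cast
  field_simp

theorem add_mul_N (hF : IsFarey Q N p q) (i k : ℤ) :
    (p (i + k * N) : ℚ) / q (i + k * N) = p i / q i + k := by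
  induction k using Int.induction_on with
  | zero => simp
  | succ k ih =>
    rw [show i + (k + 1) * N = i + k * N + N by ring, hF.add_N, ih]
    push_cast
    ring
  | pred k ih =>
    have h := hF.add_N (i + (-k - 1) * N)
    rw [show i + (-k - 1) * N + N = i + -k * N by ring, ih] at h
    push_cast at h ⊢
    linarith

theorem q_le (hF : IsFarey Q N p q) (i : ℤ) : q i ≤ Q := by
  obtain ⟨j, ⟨hj₀, hjN⟩, hij⟩ :=
    Function.Periodic.exists_mem_Ioc hF.period_q (by exact_mod_cast hF.N_pos) i 0
  rw [hij, ← hF.den_eq j]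
  exact_mod_cast (hF.mem j hj₀ (by simpa using hjN)).2.2

theorem exists_eq_of_den_le (hF : IsFarey Q N p q) {x : ℚ} (hx : x.den ≤ Q) :
    ∃ j : ℤ, (p j : ℚ) / q j = x := by
  have hk₁ := Int.le_ceil x
  have hk₂ := Int.ceil_lt_add_one x
  obtain ⟨j, -, -, hj⟩ := hF.surj (x - (⌈x⌉ - 1 : ℤ))
    ⟨by push_cast; linarith, by push_cast; linarith, by rwa [Rat.sub_intCast_den]⟩
  exact ⟨j + (⌈x⌉ - 1) * N, by rw [hF.add_mul_N, hj]; ring⟩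

theorem succ_le_of_lt (hF : IsFarey Q N p q) {i : ℤ} {x : ℚ} (hx : x.den ≤ Q)
    (hlt : (p i : ℚ) / q i < x) : (p (i + 1) : ℚ) / q (i + 1) ≤ x := by
  obtain ⟨j, rfl⟩ := hF.exists_eq_of_den_le hx
  exact hF.strictMono.le_iff_le.mpr (hF.strictMono.lt_iff_lt.mp hlt)

theorem succ_eq_of_mul_sub_mul_eq_one (hF : IsFarey Q N p q) {i x y : ℤ}
    (h : x * q i - p i * y = 1) (hQy : Q - q i < y) (hyQ : y ≤ Q) :
    p (i + 1) = x ∧ q (i + 1) = y := by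
  have hy : 0 < y := by linarith [hF.q_le i]
  have hxy : Int.gcd x y = 1 :=
    Int.isCoprime_iff_gcd_eq_one.mp ⟨q i, -p i, by linear_combination h⟩
  have hlt : (p i : ℚ) / q i < x / y :=
    (Int.cast_div_lt_cast_div_iff (hF.qpos i) hy).mpr (by linarith)
  have hden : ((x : ℚ) / y).den ≤ Q := by
    have := Rat.den_div_eq_of_coprime hy hxy
    omega
  have hsucc : (p (i + 1) : ℚ) / q (i + 1) = x / y := by
    refine (hF.succ_le_of_lt hden hlt).antisymm (not_lt.mp fun hlt' ↦ ?_)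
    have hpr := (Int.cast_div_lt_cast_div_iff (hF.qpos i) (hF.qpos (i + 1))).mp
      (hF.mono i (i + 1) (lt_add_one i))
    have hrx := (Int.cast_div_lt_cast_div_iff (hF.qpos (i + 1)) hy).mp hlt'
    have := Int.add_le_of_mul_sub_mul_pos (r := p (i + 1)) (s := q (i + 1)) (hF.qpos i) hy
      (by linarith) (by linarith) h
    linarith [hF.q_le (i + 1)]
  exact Rat.div_int_inj (hF.qpos (i + 1)) hy (hF.coprime (i + 1)) hxy hsucc

theorem exists_succ_eq (hF : IsFarey Q N p q) (i : ℤ) :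
    ∃ x y : ℤ, x * q i - p i * y = 1 ∧ Q - q i < y ∧ p (i + 1) = x ∧ q (i + 1) = y := by
  have hcop : IsCoprime (q i) (p i) :=
    (Int.isCoprime_iff_gcd_eq_one.mpr (hF.coprime i)).symm
  obtain ⟨x, y, h, hQy, hyQ⟩ := hcop.exists_mul_sub_mul_eq_one_mem_Ioc (hF.qpos i) Q
  exact ⟨x, y, h, hQy, hF.succ_eq_of_mul_sub_mul_eq_one h hQy hyQ⟩

theorem mul_sub_mul_succ_eq_one (hF : IsFarey Q N p q) (i : ℤ) :
    p (i + 1) * q i - p i * q (i + 1) = 1 := by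
  obtain ⟨x, y, h, -, hx, hy⟩ := hF.exists_succ_eq i
  rw [hx, hy, h]

theorem lt_add_succ (hF : IsFarey Q N p q) (i : ℤ) : Q < q i + q (i + 1) := by
  obtain ⟨x, y, -, hQy, -, hy⟩ := hF.exists_succ_eq i
  linarith

theorem p_mem_Ioc (hF : IsFarey Q N p q) {i : ℤ} (hi : 1 ≤ i) (hiN : i ≤ N) :
    p i ∈ Set.Ioc 0 (q i) := by
  obtain ⟨hpos, hle, -⟩ := hF.mem i hi hiN
  have hq : (0 : ℚ) < q i := by exact_mod_cast hF.qpos i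
  exact ⟨by exact_mod_cast (div_pos_iff_of_pos_right hq).mp hpos,
    by exact_mod_cast (div_le_one hq).mp hle⟩

theorem exists_q_eq_q_succ_eq (hF : IsFarey Q N p q) {a b : ℤ} (ha : 0 < a) (haQ : a ≤ Q)
    (hbQ : b ≤ Q) (hab : Int.gcd a b = 1) (hQ : Q < a + b) :
    ∃ i : ℤ, 1 ≤ i ∧ i ≤ N ∧ q i = a ∧ q (i + 1) = b := by
  obtain ⟨x, y, h, hy₀, hya⟩ :=
    (Int.isCoprime_iff_gcd_eq_one.mpr hab).exists_mul_sub_mul_eq_one_mem_Ioc ha a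
  have hy : 0 < y := by linarith
  have hya' : Int.gcd y a = 1 :=
    Int.isCoprime_iff_gcd_eq_one.mp ⟨-b, x, by linear_combination h⟩
  have hmem : (y : ℚ) / a ∈ fareySet Q := by
    have hden := Rat.den_div_eq_of_coprime ha hya'
    refine ⟨by positivity, (div_le_one (by exact_mod_cast ha)).mpr (by exact_mod_cast hya), ?_⟩
    omega
  obtain ⟨i, hi, hiN, hiya⟩ := hF.surj _ hmem
  obtain ⟨hpi, hqi⟩ := Rat.div_int_inj (hF.qpos i) ha (hF.coprime i) hya' hiya
  refine ⟨i, hi, hiN, hqi, (hF.succ_eq_of_mul_sub_mul_eq_one (x := x) ?_ ?_ hbQ).2⟩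
  · rw [hpi, hqi]
    linear_combination h
  · linarith

theorem eq_of_q_eq_of_q_succ_eq (hF : IsFarey Q N p q) {i j : ℤ} (hi : 1 ≤ i) (hiN : i ≤ N)
    (hj : 1 ≤ j) (hjN : j ≤ N) (hq : q i = q j) (hq_succ : q (i + 1) = q (j + 1)) : i = j := by
  obtain ⟨hpi₀, hpi⟩ := hF.p_mem_Ioc hi hiN
  obtain ⟨hpj₀, hpj⟩ := hF.p_mem_Ioc hj hjN
  have hdi := hF.mul_sub_mul_succ_eq_one i
  rw [hq] at hpi
  rw [hq, hq_succ] at hdi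
  have hp : p i = p j := Int.eq_of_mul_sub_mul_eq_one (a := q j) (b := q (j + 1))
    (x := p (i + 1)) (x' := p (j + 1)) (by linear_combination hdi)
    (by linear_combination hF.mul_sub_mul_succ_eq_one j)
    (abs_sub_lt_iff.mpr ⟨by linarith, by linarith⟩)
  exact hF.strictMono.injective (by simp only [hp, hq])

end IsFarey

theorem farey_consecutive_denominators_general (Q N : ℕ) (p q : ℤ → ℤ)
    (hF : IsFarey Q N p q) (a b : ℤ) :
    ((∃ i : ℤ, 1 ≤ i ∧ i ≤ (N : ℤ) ∧ q i = a ∧ q (i + 1) = b) ↔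
      (1 ≤ a ∧ a ≤ (Q : ℤ) ∧ 1 ≤ b ∧ b ≤ (Q : ℤ) ∧ Int.gcd a b = 1 ∧ (Q : ℤ) < a + b)) ∧
    ((1 ≤ a ∧ a ≤ (Q : ℤ) ∧ 1 ≤ b ∧ b ≤ (Q : ℤ) ∧ Int.gcd a b = 1 ∧ (Q : ℤ) < a + b) →
      ∃! i : ℤ, 1 ≤ i ∧ i ≤ (N : ℤ) ∧ q i = a ∧ q (i + 1) = b) := by
  refine ⟨⟨?_, ?_⟩, ?_⟩
  · rintro ⟨i, -, -, rfl, rfl⟩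
    have hcop : IsCoprime (q i) (q (i + 1)) :=
      ⟨p (i + 1), -p i, by linear_combination hF.mul_sub_mul_succ_eq_one i⟩
    exact ⟨hF.qpos i, hF.q_le i, hF.qpos (i + 1), hF.q_le (i + 1),
      Int.isCoprime_iff_gcd_eq_one.mp hcop, hF.lt_add_succ i⟩
  · rintro ⟨ha, haQ, -, hbQ, hab, hQ⟩
    exact hF.exists_q_eq_q_succ_eq ha haQ hbQ hab hQ
  · rintro ⟨ha, haQ, -, hbQ, hab, hQ⟩
    obtain ⟨i, hi, hiN, hia, hib⟩ := hF.exists_q_eq_q_succ_eq ha haQ hbQ hab hQ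
    exact ⟨i, ⟨hi, hiN, hia, hib⟩, fun j ⟨hj, hjN, hja, hjb⟩ ↦
      hF.eq_of_q_eq_of_q_succ_eq hj hjN hi hiN (hja.trans hia.symm) (hjb.trans hib.symm)⟩

/-- Consecutive denominators of `F_Q` are exactly the coprime pairs `(a,b)` with
`1 ≤ a, b ≤ Q` and `a + b > Q`, and the index at which a given pair occurs is unique. -/
theorem farey_consecutive_denominators (Q N : ℕ) (p q : ℤ → ℤ) (hQ : 1 ≤ Q)
    (hF : IsFarey Q N p q) (a b : ℤ) (ha : 0 < a) (hb : 0 < b) :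
    ((∃ i : ℤ, 1 ≤ i ∧ i ≤ (N : ℤ) ∧ q i = a ∧ q (i + 1) = b) ↔
      (1 ≤ a ∧ a ≤ (Q : ℤ) ∧ 1 ≤ b ∧ b ≤ (Q : ℤ) ∧ Int.gcd a b = 1 ∧ (Q : ℤ) < a + b)) ∧
    ((1 ≤ a ∧ a ≤ (Q : ℤ) ∧ 1 ≤ b ∧ b ≤ (Q : ℤ) ∧ Int.gcd a b = 1 ∧ (Q : ℤ) < a + b) →
      ∃! i : ℤ, 1 ≤ i ∧ i ≤ (N : ℤ) ∧ q i = a ∧ q (i + 1) = b) :=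
  farey_consecutive_denominators_general Q N p q hF a b
end

section
/- The map T(x,y) = (y, ⌊(1+x)/y⌋·y − x) maps the Farey triangle T = {(x,y) ∈ [0,1]² : x + y > 1} bijectively onto itself. -/
open MeasureTheory

/-- The Farey triangle `𝒯 = {(x,y) ∈ [0,1]² : x + y > 1}`. -/
def fareyTriangle : Set (ℝ × ℝ) :=
  {v | v.1 ∈ Set.Icc (0 : ℝ) 1 ∧ v.2 ∈ Set.Icc (0 : ℝ) 1 ∧ 1 < v.1 + v.2}

/-- The Farey triangle map `T(x,y) = (y, ⌊(1+x)/y⌋·y − x)`. -/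
noncomputable def Tmap (v : ℝ × ℝ) : ℝ × ℝ :=
  (v.2, (⌊(1 + v.1) / v.2⌋ : ℝ) * v.2 - v.1)

/-!
With `k = ⌊(1 + x) / y⌋` the floor inequalities `k y ≤ 1 + x < (k + 1) y` say exactly that
`T (x, y) = (y, k y - x)` lies in the triangle again. The map is reversible: the reflection
`σ (x, y) = (y, x)` preserves the triangle and `σ T σ` inverts `T`, because
`1 + (k y - x) = k y + (1 - x)` with `0 ≤ 1 - x < y`, so the image recovers the same `k`.
-/

noncomputable def Tinv (v : ℝ × ℝ) : ℝ × ℝ :=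
  (Tmap v.swap).swap

theorem Int.floor_intCast_mul_add_div {k : Type*} [Field k] [LinearOrder k] [IsOrderedRing k]
    [FloorRing k] (n : ℤ) {a b : k} (hb : 0 < b) (ha : 0 ≤ a) (hab : a < b) :
    ⌊(n * b + a) / b⌋ = n := by
  rw [add_div, mul_div_cancel_right₀ _ hb.ne', add_comm, Int.floor_add_intCast,
    Int.floor_eq_zero_iff.mpr ⟨div_nonneg ha hb.le, (div_lt_one hb).mpr hab⟩, zero_add]

theorem swap_mem_fareyTriangle {v : ℝ × ℝ} : v.swap ∈ fareyTriangle ↔ v ∈ fareyTriangle := by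
  simp only [fareyTriangle, Set.mem_ofPred_eq, Prod.fst_swap, Prod.snd_swap, add_comm v.2]
  tauto

theorem Tmap_mapsTo : Set.MapsTo Tmap fareyTriangle fareyTriangle := by
  rintro ⟨x, y⟩ ⟨⟨hx0, hx1⟩, ⟨hy0, hy1⟩, hxy⟩
  have hy : 0 < y := by linarith
  have hlow := Int.sub_floor_div_mul_nonneg (1 + x) hy
  have hhigh := Int.sub_floor_div_mul_lt (1 + x) hy
  refine ⟨⟨hy0, hy1⟩, ⟨?_, ?_⟩, ?_⟩ <;> dsimp only [Tmap] <;> linarith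

theorem Tinv_mapsTo : Set.MapsTo Tinv fareyTriangle fareyTriangle := fun _ hv =>
  swap_mem_fareyTriangle.mpr (Tmap_mapsTo (swap_mem_fareyTriangle.mpr hv))

theorem Tinv_Tmap : Set.LeftInvOn Tinv Tmap fareyTriangle := by
  rintro ⟨x, y⟩ ⟨⟨-, hx1⟩, ⟨-, -⟩, hxy⟩
  have hy : 0 < y := by linarith
  have hshift : 1 + ((⌊(1 + x) / y⌋ : ℝ) * y - x) = ⌊(1 + x) / y⌋ * y + (1 - x) := by ring
  simp only [Tinv, Tmap, Prod.swap_prod_mk, hshift,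
    Int.floor_intCast_mul_add_div _ hy (sub_nonneg.mpr hx1) (by linarith : 1 - x < y),
    sub_sub_cancel]

theorem Tmap_Tinv : Set.RightInvOn Tinv Tmap fareyTriangle := fun v hv => by
  simpa only [Tinv, Prod.swap_swap] using
    congrArg Prod.swap (Tinv_Tmap (swap_mem_fareyTriangle.mpr hv))

/-- `T` maps the Farey triangle bijectively onto itself. -/
theorem Tmap_bijOn : Set.BijOn Tmap fareyTriangle fareyTriangle :=
  Set.InvOn.bijOn ⟨Tinv_Tmap, Tmap_Tinv⟩ Tmap_mapsTo Tinv_mapsTo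
end

section
/- The map T(x,y) = (y, ⌊(1+x)/y⌋·y − x) preserves Lebesgue measure on the Farey triangle T = {(x,y) ∈ [0,1]² : x + y > 1}: for any measurable subset Ω ⊆ T, the area of T(Ω) equals the area of Ω. -/
open MeasureTheory

/-! On the piece where `⌊(1 + x) / y⌋ = k`, `T` is the shear `(x, y) ↦ (y, k y - x)` of
determinant `1`, so it preserves the area of each piece. Moreover `T` is injective on the
triangle: `T (x, y) = T (x', y')` forces `y = y'` and `x ≡ x' (mod y)`, while `x` and `x'`
both lie in the window `(1 - y, 1]` of length `y`. Hence the images of the pieces are disjoint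
and their areas add up to the area of `Ω`. -/

open Set Function

section PiecewiseLinear

variable {E ι : Type*} [NormedAddCommGroup E] [NormedSpace ℝ E] [FiniteDimensional ℝ E]
  [MeasurableSpace E] [BorelSpace E] [Countable ι] [MeasurableSpace ι] [MeasurableSingletonClass ι]

theorem MeasureTheory.Measure.addHaar_image_eq_of_injOn_of_piecewise_det_one
    (μ : Measure E) [μ.IsAddHaarMeasure] {f : E → E} {s : Set E} {c : E → ι}
    (L : ι → E ≃L[ℝ] E) (hdet : ∀ i, |LinearMap.det (L i : E →ₗ[ℝ] E)| = 1)
    (hs : MeasurableSet s) (hc : Measurable c) (hf : ∀ x ∈ s, f x = L (c x) x)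
    (hinj : InjOn f s) : μ (f '' s) = μ s := by
  set piece : ι → Set E := fun i => s ∩ c ⁻¹' {i}
  have piece_measurable (i : ι) : MeasurableSet (piece i) :=
    hs.inter (hc (measurableSet_singleton i))
  have piece_disjoint : Pairwise (Disjoint on piece) := fun i j hij =>
    disjoint_left.2 fun x hi hj => hij (hi.2.symm.trans hj.2)
  have s_eq : s = ⋃ i, piece i := by
    ext x; simp [piece]
  have image_piece (i : ι) : f '' piece i = L i '' piece i :=
    image_congr fun x hx => hx.2 ▸ hf x hx.1
  have image_measurable (i : ι) : MeasurableSet (f '' piece i) := by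
    rw [image_piece]
    exact (L i).toHomeomorph.measurableEmbedding.measurableSet_image.2 (piece_measurable i)
  have image_disjoint : Pairwise (Disjoint on fun i => f '' piece i) := fun i j hij =>
    disjoint_iff_inter_eq_empty.2 <| by
      rw [← hinj.image_inter inter_subset_left inter_subset_left,
        disjoint_iff_inter_eq_empty.1 (piece_disjoint hij), image_empty]
  calc μ (f '' s) = ∑' i, μ (L i '' piece i) := by
        rw [s_eq, image_iUnion, measure_iUnion image_disjoint image_measurable]
        simp only [image_piece]
    _ = ∑' i, μ (piece i) := by simp [hdet]
    _ = μ s := by rw [s_eq, measure_iUnion piece_disjoint piece_measurable]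

end PiecewiseLinear

noncomputable def fareyShear (k : ℤ) : (ℝ × ℝ) ≃L[ℝ] (ℝ × ℝ) :=
  LinearEquiv.toContinuousLinearEquiv
    { toFun := fun v => (v.2, k * v.2 - v.1)
      invFun := fun v => (k * v.1 - v.2, v.1)
      map_add' := fun v w => by ext <;> dsimp; ring
      map_smul' := fun a v => by ext <;> dsimp; ring
      left_inv := fun v => by simp
      right_inv := fun v => by simp : (ℝ × ℝ) ≃ₗ[ℝ] (ℝ × ℝ) }

theorem det_fareyShear (k : ℤ) :
    LinearMap.det (fareyShear k : (ℝ × ℝ) →ₗ[ℝ] (ℝ × ℝ)) = 1 := by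
  rw [← LinearMap.det_toMatrix (Module.Basis.finTwoProd ℝ), Matrix.det_fin_two]
  simp [LinearMap.toMatrix_apply, fareyShear]

theorem Tmap_eq_fareyShear (v : ℝ × ℝ) : Tmap v = fareyShear ⌊(1 + v.1) / v.2⌋ v := rfl

theorem Tmap_injOn_fareyTriangle : InjOn Tmap fareyTriangle := by
  rintro ⟨x, y⟩ ⟨⟨-, hx⟩, ⟨hy, -⟩, hxy⟩ ⟨x', y'⟩ ⟨⟨-, hx'⟩, -, hxy'⟩ h
  simp only [Tmap, Prod.mk.injEq] at h hxy hxy' hx hx' hy ⊢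
  obtain ⟨rfl, h⟩ := h
  generalize ⌊(1 + x) / y⌋ = a at h
  generalize ⌊(1 + x') / y⌋ = b at h
  have hlt : |((a - b : ℤ) : ℝ) * y| < 1 * y := by
    have hdiff : ((a - b : ℤ) : ℝ) * y = x - x' := by push_cast; linarith
    rw [hdiff, one_mul]
    exact abs_sub_lt_iff.2 ⟨by linarith, by linarith⟩
  rw [abs_mul, abs_of_nonneg hy] at hlt
  have hab : |((a - b : ℤ) : ℝ)| < 1 := lt_of_mul_lt_mul_right hlt hy
  rw [← Int.cast_abs, ← Int.cast_one, Int.cast_lt, Int.abs_lt_one_iff, sub_eq_zero] at hab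
  rw [hab] at h
  exact ⟨by linarith, rfl⟩

/-- `T` preserves Lebesgue measure on the Farey triangle: the image of any measurable
subset of the triangle has the same area. -/
theorem Tmap_measure_preserving (Ω : Set (ℝ × ℝ)) (hΩ : Ω ⊆ fareyTriangle)
    (hmeas : MeasurableSet Ω) : volume (Tmap '' Ω) = volume Ω :=
  volume.addHaar_image_eq_of_injOn_of_piecewise_det_one fareyShear
    (fun k => by rw [det_fareyShear, abs_one]) hmeas
    (((measurable_const.add measurable_fst).div measurable_snd).floor)
    (fun v _ => Tmap_eq_fareyShear v) (Tmap_injOn_fareyTriangle.mono hΩ)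
end
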